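/- Under the hypotheses: 0 ≤ l < k ≤ n, n ≥ 3, a ∈ Γ⁺ with σ_k(a) = σ_l(a) and m := m_{k,l}(a) ∈ (2,n], let ψ(r,β) be the unique smooth solution on [1,+∞) of ψ^k + ξ̄_k(a) r ψ^{k−1}ψ′ − ψ^l − ξ̲_l(a) r ψ^{l−1}ψ′ = 0 (r > 1), ψ(1) = β, and set B(β) := β^{m ξ̄_k(a) − k + l}(β^{k−l} − 1). Then for every β ≥ 1: (a) β − 1 ≤ r^m·(ψ(r,β) − 1) ≤ B(β)/(k−l) for all r ≥ 1; (b) lim_{r→+∞} r^m·(ψ(r,β) − 1) = B(β)/(k−l); in particular ψ(r,β) = 1 + O(r^{−m}) as r → +∞. -/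

import Mathlib

open Finset Filter MeasureTheory Set

noncomputable def esymm (n : ℕ) (k : ℤ) (a : Fin n → ℝ) : ℝ :=
  if 0 ≤ k then
    ∑ s ∈ Finset.powersetCard k.toNat (Finset.univ : Finset (Fin n)), ∏ i ∈ s, a i
  else 0

noncomputable def esymmDel (n : ℕ) (k : ℤ) (i : Fin n) (a : Fin n → ℝ) : ℝ :=
  if 0 ≤ k then
    ∑ s ∈ Finset.powersetCard k.toNat ((Finset.univ : Finset (Fin n)).erase i),
      ∏ j ∈ s, a j
  else 0

noncomputable def esymmDel2 (n : ℕ) (k : ℤ) (i j : Fin n) (a : Fin n → ℝ) : ℝ :=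
  if 0 ≤ k then
    ∑ s ∈ Finset.powersetCard k.toNat
        (((Finset.univ : Finset (Fin n)).erase i).erase j),
      ∏ t ∈ s, a t
  else 0

noncomputable def Xi (n : ℕ) (k : ℤ) (a x : Fin n → ℝ) : ℝ :=
  (∑ i, esymmDel n (k - 1) i a * a i ^ 2 * x i ^ 2) /
    (esymm n k a * ∑ i, a i * x i ^ 2)

noncomputable def xiSup (n : ℕ) (k : ℤ) (a : Fin n → ℝ) : ℝ :=
  sSup {y | ∃ x : Fin n → ℝ, x ≠ 0 ∧ Xi n k a x = y}

noncomputable def xiInf (n : ℕ) (k : ℤ) (a : Fin n → ℝ) : ℝ :=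
  sInf {y | ∃ x : Fin n → ℝ, x ≠ 0 ∧ Xi n k a x = y}

noncomputable def mkl (n : ℕ) (k l : ℤ) (a : Fin n → ℝ) : ℝ :=
  ((k : ℝ) - (l : ℝ)) / (xiSup n k a - xiInf n l a)

def GammaK (n : ℕ) (k : ℤ) : Set (Fin n → ℝ) :=
  {lam | ∀ j : ℤ, 1 ≤ j → j ≤ k → 0 < esymm n j lam}

noncomputable def hessian (n : ℕ) (f : (Fin n → ℝ) → ℝ) (x : Fin n → ℝ) :
    Matrix (Fin n) (Fin n) ℝ :=
  fun i j => fderiv ℝ (fun y => fderiv ℝ f y (Pi.single j 1)) x (Pi.single i 1)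

def IsViscSubsol (n : ℕ) (k l : ℤ) (Ω : Set (Fin n → ℝ)) (u : (Fin n → ℝ) → ℝ) : Prop :=
  ∀ v : (Fin n → ℝ) → ℝ, ContDiffOn ℝ 2 v Ω →
    ∀ x₀ ∈ Ω, (∀ x ∈ Ω, u x ≤ v x) → v x₀ = u x₀ →
      ∀ hH : (hessian n v x₀).IsHermitian,
        esymm n l hH.eigenvalues ≤ esymm n k hH.eigenvalues

def IsViscSupersol (n : ℕ) (k l : ℤ) (Ω : Set (Fin n → ℝ)) (u : (Fin n → ℝ) → ℝ) : Prop :=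
  ∀ v : (Fin n → ℝ) → ℝ, ContDiffOn ℝ 2 v Ω →
    (∀ x ∈ Ω, ∀ hH : (hessian n v x).IsHermitian,
      hH.eigenvalues ∈ closure (GammaK n k)) →
    ∀ x₀ ∈ Ω, (∀ x ∈ Ω, v x ≤ u x) → v x₀ = u x₀ →
      ∀ hH : (hessian n v x₀).IsHermitian,
        esymm n k hH.eigenvalues ≤ esymm n l hH.eigenvalues

def IsViscSol (n : ℕ) (k l : ℤ) (Ω : Set (Fin n → ℝ)) (u : (Fin n → ℝ) → ℝ) : Prop :=
  IsViscSubsol n k l Ω u ∧ IsViscSupersol n k l Ω u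

def SolvesODE (n : ℕ) (k l : ℤ) (a : Fin n → ℝ) (β : ℝ) (ψ : ℝ → ℝ) : Prop :=
  ContDiffOn ℝ (⊤ : ℕ∞) ψ (Set.Ici 1) ∧ ψ 1 = β ∧
  ∀ r : ℝ, 1 < r →
    ψ r ^ k + xiSup n k a * r * ψ r ^ (k - 1) * deriv ψ r
      - ψ r ^ l - xiInf n l a * r * ψ r ^ (l - 1) * deriv ψ r = 0

lemma esymm_pos (n : ℕ) (k : ℤ) (a : Fin n → ℝ) (ha : ∀ i, 0 < a i)
    (hk0 : 0 ≤ k) (hkn : k ≤ (n : ℤ)) : 0 < esymm n k a := by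
  rw [esymm, if_pos hk0]
  apply Finset.sum_pos
  · intro s hs
    exact Finset.prod_pos fun i _ => ha i
  · rw [Finset.powersetCard_nonempty]
    simpa using (Int.toNat_le.2 hkn)

lemma esymmDel_nonneg (n : ℕ) (k : ℤ) (i : Fin n) (a : Fin n → ℝ) (ha : ∀ i, 0 ≤ a i) :
    0 ≤ esymmDel n k i a := by
  rw [esymmDel]
  split
  · exact Finset.sum_nonneg fun s _ => Finset.prod_nonneg fun j _ => ha j
  · exact le_refl 0

lemma esymmDel_pos (n : ℕ) (k : ℤ) (i : Fin n) (a : Fin n → ℝ) (ha : ∀ i, 0 < a i)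
    (hk0 : 0 ≤ k) (hkn : k + 1 ≤ (n : ℤ)) : 0 < esymmDel n k i a := by
  rw [esymmDel, if_pos hk0]
  apply Finset.sum_pos
  · intro s hs
    exact Finset.prod_pos fun j _ => ha j
  · rw [Finset.powersetCard_nonempty]
    rw [Finset.card_erase_of_mem (Finset.mem_univ i), Finset.card_univ, Fintype.card_fin]
    omega

lemma sumax_pos {n : ℕ} {a x : Fin n → ℝ} (ha : ∀ i, 0 < a i) (hx : x ≠ 0) :
    0 < ∑ i, a i * x i ^ 2 := by
  obtain ⟨i, hi⟩ := Function.ne_iff.1 hx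
  refine Finset.sum_pos' (fun j _ => ?_) ⟨i, Finset.mem_univ i, ?_⟩
  · have := (ha j).le; positivity
  · exact mul_pos (ha i) (pow_two_pos_of_ne_zero hi)

lemma xi_nonneg {n : ℕ} (k : ℤ) {a : Fin n → ℝ} (ha : ∀ i, 0 < a i)
    (hσ : 0 < esymm n k a) (x : Fin n → ℝ) (hx : x ≠ 0) : 0 ≤ Xi n k a x := by
  apply div_nonneg
  · exact Finset.sum_nonneg fun i _ => by
      have := esymmDel_nonneg n (k-1) i a (fun j => (ha j).le); positivity
  · have h2 := (sumax_pos ha hx).le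
    positivity

lemma xi_le {n : ℕ} (k : ℤ) {a : Fin n → ℝ} (ha : ∀ i, 0 < a i)
    (hσ : 0 < esymm n k a) (x : Fin n → ℝ) (hx : x ≠ 0) :
    Xi n k a x ≤ (∑ j, esymmDel n (k-1) j a * a j) / esymm n k a := by
  have hS := sumax_pos ha hx
  rw [Xi, div_le_div_iff₀ (by positivity) hσ]
  have key : (∑ i, esymmDel n (k - 1) i a * a i ^ 2 * x i ^ 2)
      ≤ (∑ j, esymmDel n (k-1) j a * a j) * ∑ i, a i * x i ^ 2 := by
    rw [Finset.mul_sum]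
    apply Finset.sum_le_sum
    intro i _
    have hd : 0 ≤ esymmDel n (k-1) i a := esymmDel_nonneg _ _ _ _ (fun j => (ha j).le)
    have h1 : esymmDel n (k-1) i a * a i ≤ ∑ j, esymmDel n (k-1) j a * a j := by
      apply Finset.single_le_sum (f := fun j => esymmDel n (k-1) j a * a j)
        (fun j _ => mul_nonneg (esymmDel_nonneg _ _ _ _ (fun t => (ha t).le)) (ha j).le)
        (Finset.mem_univ i)
    calc esymmDel n (k - 1) i a * a i ^ 2 * x i ^ 2
        = (esymmDel n (k-1) i a * a i) * (a i * x i ^ 2) := by ring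
      _ ≤ (∑ j, esymmDel n (k-1) j a * a j) * (a i * x i ^ 2) := by
          apply mul_le_mul_of_nonneg_right h1 (by have := (ha i).le; positivity)
  calc (∑ i, esymmDel n (k - 1) i a * a i ^ 2 * x i ^ 2) * esymm n k a
      ≤ ((∑ j, esymmDel n (k-1) j a * a j) * ∑ i, a i * x i ^ 2) * esymm n k a :=
        mul_le_mul_of_nonneg_right key hσ.le
    _ = (∑ j, esymmDel n (k-1) j a * a j) * (esymm n k a * ∑ i, a i * x i ^ 2) := by ring

lemma xiSet_nonempty {n : ℕ} (hn : 0 < n) (k : ℤ) (a : Fin n → ℝ) :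
    {y | ∃ x : Fin n → ℝ, x ≠ 0 ∧ Xi n k a x = y}.Nonempty := by
  refine ⟨Xi n k a (fun _ => 1), fun _ => 1, ?_, rfl⟩
  intro h
  have := congrFun h ⟨0, hn⟩
  simp at this

lemma xiSet_bddAbove {n : ℕ} (k : ℤ) {a : Fin n → ℝ} (ha : ∀ i, 0 < a i)
    (hσ : 0 < esymm n k a) :
    BddAbove {y | ∃ x : Fin n → ℝ, x ≠ 0 ∧ Xi n k a x = y} := by
  refine ⟨(∑ j, esymmDel n (k-1) j a * a j) / esymm n k a, ?_⟩
  rintro y ⟨x, hx, rfl⟩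
  exact xi_le k ha hσ x hx

lemma xiInf_nonneg {n : ℕ} (hn : 0 < n) (l : ℤ) {a : Fin n → ℝ} (ha : ∀ i, 0 < a i)
    (hσ : 0 < esymm n l a) : 0 ≤ xiInf n l a := by
  apply le_csInf (xiSet_nonempty hn l a)
  rintro y ⟨x, hx, rfl⟩
  exact xi_nonneg l ha hσ x hx

lemma xiSup_pos {n : ℕ} {k : ℤ} {a : Fin n → ℝ} (ha : ∀ i, 0 < a i)
    (hk1 : 1 ≤ k) (hkn : k ≤ (n : ℤ)) : 0 < xiSup n k a := by
  have hn : 0 < n := by omega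
  have hσ : 0 < esymm n k a := esymm_pos n k a ha (by omega) hkn
  have hmem : Xi n k a (fun _ => 1) ∈ {y | ∃ x : Fin n → ℝ, x ≠ 0 ∧ Xi n k a x = y} := by
    refine ⟨fun _ => 1, ?_, rfl⟩
    intro h; have := congrFun h ⟨0, hn⟩; simp at this
  have hpos : 0 < Xi n k a (fun _ => 1) := by
    rw [Xi]
    apply div_pos
    · apply Finset.sum_pos
      · intro i _
        have hd : 0 < esymmDel n (k-1) i a := esymmDel_pos n (k-1) i a ha (by omega) (by omega)
        have := ha i; positivity
      · exact ⟨⟨0, hn⟩, Finset.mem_univ _⟩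
    · apply mul_pos hσ
      apply Finset.sum_pos (fun i _ => by have := ha i; positivity) ⟨⟨0, hn⟩, Finset.mem_univ _⟩
  exact lt_of_lt_of_le hpos (le_csSup (xiSet_bddAbove k ha hσ) hmem)


lemma hasDerivAt_G (k l : ℤ) (ξs ξi m : ℝ) (ψ : ℝ → ℝ) {r : ℝ} (hr : 1 < r)
    (hψd : HasDerivAt ψ (deriv ψ r) r) (hP : 0 < ψ r)
    (hq : (k:ℝ) - (l:ℝ) = m * (ξs - ξi))
    (hode : ψ r ^ k + ξs * r * ψ r ^ (k-1) * deriv ψ r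
      - ψ r ^ l - ξi * r * ψ r ^ (l-1) * deriv ψ r = 0) :
    HasDerivAt (fun t => t ^ m * ψ t ^ (m*ξs - ((k:ℝ)-(l:ℝ))) * (ψ t ^ ((k:ℝ)-(l:ℝ)) - 1))
      0 r := by
  have h0 : (0:ℝ) < r := lt_trans one_pos hr
  set q : ℝ := (k:ℝ) - (l:ℝ) with hqdef
  set c' : ℝ := m*ξs - q with hc'def
  set P : ℝ := ψ r with hPdef
  set P' : ℝ := deriv ψ r with hP'def
  have h1 : HasDerivAt (fun t : ℝ => t^m) (m * r^(m-1)) r :=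
    Real.hasDerivAt_rpow_const (Or.inl h0.ne')
  have h2 : HasDerivAt (fun t => ψ t ^ c') (P' * c' * P^(c'-1)) r :=
    hψd.rpow_const (Or.inl hP.ne')
  have h3 : HasDerivAt (fun t => ψ t ^ q - 1) (P' * q * P^(q-1)) r :=
    (hψd.rpow_const (Or.inl hP.ne')).sub_const 1
  have total : HasDerivAt (fun t => t ^ m * ψ t ^ c' * (ψ t ^ q - 1))
      ((m * r ^ (m-1) * P ^ c' + r ^ m * (P' * c' * P ^ (c'-1))) * (P ^ q - 1)
        + r ^ m * P ^ c' * (P' * q * P ^ (q-1))) r := (h1.mul h2).mul h3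
  convert total using 1
  have e1 : P ^ c' = P ^ (c'-1) * P := by
    conv_lhs => rw [show c' = (c'-1) + 1 by ring]
    rw [Real.rpow_add hP, Real.rpow_one]
  have e2 : P ^ q = P ^ (q-1) * P := by
    conv_lhs => rw [show q = (q-1) + 1 by ring]
    rw [Real.rpow_add hP, Real.rpow_one]
  have e3 : P ^ (k:ℤ) = P ^ ((l:ℝ)-1) * P * P ^ q := by
    rw [← Real.rpow_intCast P k]
    conv_lhs => rw [show ((k:ℤ):ℝ) = (((l:ℝ)-1) + 1) + q by push_cast; ring]
    rw [Real.rpow_add hP, Real.rpow_add hP, Real.rpow_one]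
  have e4 : P ^ (k-1:ℤ) = P ^ ((l:ℝ)-1) * P ^ q := by
    rw [← Real.rpow_intCast P (k-1)]
    conv_lhs => rw [show (((k-1):ℤ):ℝ) = ((l:ℝ)-1) + q by push_cast; ring]
    rw [Real.rpow_add hP]
  have e5 : P ^ (l:ℤ) = P ^ ((l:ℝ)-1) * P := by
    rw [← Real.rpow_intCast P l]
    conv_lhs => rw [show ((l:ℤ):ℝ) = ((l:ℝ)-1) + 1 by push_cast; ring]
    rw [Real.rpow_add hP, Real.rpow_one]
  have e6 : P ^ (l-1:ℤ) = P ^ ((l:ℝ)-1) := by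
    rw [← Real.rpow_intCast P (l-1)]
    congr 1
    push_cast; ring
  have e7 : r ^ m = r ^ (m-1) * r := by
    conv_lhs => rw [show m = (m-1) + 1 by ring]
    rw [Real.rpow_add h0, Real.rpow_one]
  rw [e3, e4, e5, e6] at hode
  have hu : 0 < P ^ ((l:ℝ)-1) := Real.rpow_pos_of_pos hP _
  have hode' : P*(P^q) - P + r*P'*(ξs*(P^q) - ξi) = 0 := by
    apply mul_left_cancel₀ hu.ne'
    rw [mul_zero]
    linear_combination hode
  rw [e1, e7]
  linear_combination (-(m*(r^(m-1))*(P^(c'-1)))) * hode'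
    + ((P^(c'-1))*(r^(m-1))*r*P'*q) * e2
    + (-((P^(c'-1))*(r^(m-1))*r*P')*((P^q)-1)) * hc'def
    + (-((P^(c'-1))*(r^(m-1))*r*P')) * hq


section
variable (k l : ℤ) (ξs ξi m : ℝ) (ψ : ℝ → ℝ)

lemma G_continuousOn (c' q : ℝ) (s : ℝ) (hcont : ContinuousOn ψ (Set.Ici 1))
    (hpos : ∀ t ∈ Set.Icc (1:ℝ) s, 0 < ψ t) :
    ContinuousOn (fun t => t ^ m * ψ t ^ c' * (ψ t ^ q - 1)) (Set.Icc 1 s) := by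
  have hψc : ContinuousOn ψ (Set.Icc (1:ℝ) s) := hcont.mono Set.Icc_subset_Ici_self
  apply ContinuousOn.mul
  apply ContinuousOn.mul
  · exact continuousOn_id.rpow_const (fun t ht => Or.inl (by
      have : (1:ℝ) ≤ t := ht.1
      positivity))
  · exact hψc.rpow_const (fun t ht => Or.inl (hpos t ht).ne')
  · exact (hψc.rpow_const (fun t ht => Or.inl (hpos t ht).ne')).sub continuousOn_const
end

section
variable {k l : ℤ} {ξs ξi m : ℝ} {ψ : ℝ → ℝ}

lemma psi_hasDerivAt (hsm : ContDiffOn ℝ (⊤ : ℕ∞) ψ (Set.Ici 1)) {r : ℝ} (hr : 1 < r) :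
    HasDerivAt ψ (deriv ψ r) r := by
  have h1 : Set.Ici (1:ℝ) ∈ nhds r :=
    Filter.mem_of_superset (isOpen_Ioi.mem_nhds hr) Set.Ioi_subset_Ici_self
  exact ((hsm.contDiffAt h1).differentiableAt (by simp)).hasDerivAt

lemma G_const (hsm : ContDiffOn ℝ (⊤ : ℕ∞) ψ (Set.Ici 1))
    (hq : (k:ℝ) - (l:ℝ) = m * (ξs - ξi))
    (hode : ∀ r : ℝ, 1 < r → ψ r ^ k + ξs * r * ψ r ^ (k-1) * deriv ψ r
      - ψ r ^ l - ξi * r * ψ r ^ (l-1) * deriv ψ r = 0)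
    {s : ℝ} (hs : 1 < s) (hpos : ∀ t ∈ Set.Icc (1:ℝ) s, 0 < ψ t) :
    s ^ m * ψ s ^ (m*ξs - ((k:ℝ)-(l:ℝ))) * (ψ s ^ ((k:ℝ)-(l:ℝ)) - 1)
      = ψ 1 ^ (m*ξs - ((k:ℝ)-(l:ℝ))) * (ψ 1 ^ ((k:ℝ)-(l:ℝ)) - 1) := by
  set G : ℝ → ℝ := fun t => t ^ m * ψ t ^ (m*ξs - ((k:ℝ)-(l:ℝ))) * (ψ t ^ ((k:ℝ)-(l:ℝ)) - 1)
    with hGdef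
  have hGcont : ContinuousOn G (Set.Icc 1 s) :=
    G_continuousOn m ψ _ _ s hsm.continuousOn hpos
  -- on every [r, s] with 1 < r, G is constant
  have step1 : ∀ r ∈ Set.Ioc (1:ℝ) s, G r = G s := by
    intro r hr
    have hconst := constant_of_has_deriv_right_zero
      (f := G) (a := r) (b := s)
      (hGcont.mono (Set.Icc_subset_Icc hr.1.le le_rfl))
      (fun x hx => by
        have hx1 : 1 < x := lt_of_lt_of_le hr.1 hx.1
        have hxs : x ∈ Set.Icc (1:ℝ) s := ⟨hx1.le, hx.2.le⟩
        exact (hasDerivAt_G k l ξs ξi m ψ hx1 (psi_hasDerivAt hsm hx1)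
          (hpos x hxs) hq (hode x hx1)).hasDerivWithinAt)
    exact (hconst s (Set.right_mem_Icc.2 hr.2)).symm
  -- limit as r → 1⁺
  have hcw : ContinuousWithinAt G (Set.Icc 1 s) 1 :=
    hGcont.continuousWithinAt (Set.left_mem_Icc.2 hs.le)
  have h1 : Filter.Tendsto G (nhdsWithin 1 (Set.Ioc 1 s)) (nhds (G 1)) :=
    hcw.tendsto.mono_left (nhdsWithin_mono _ Set.Ioc_subset_Icc_self)
  have h2 : Filter.Tendsto G (nhdsWithin 1 (Set.Ioc 1 s)) (nhds (G s)) := by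
    apply Filter.Tendsto.congr' _ tendsto_const_nhds
    filter_upwards [self_mem_nhdsWithin] with r hr
    exact (step1 r hr).symm
  have hne : (nhdsWithin (1:ℝ) (Set.Ioc 1 s)).NeBot := by
    rw [nhdsWithin_Ioc_eq_nhdsGT hs]
    infer_instance
  have := tendsto_nhds_unique h2 h1
  have hG1 : G 1 = ψ 1 ^ (m*ξs - ((k:ℝ)-(l:ℝ))) * (ψ 1 ^ ((k:ℝ)-(l:ℝ)) - 1) := by
    rw [hGdef]
    simp [Real.one_rpow]
  rw [← hG1, ← this]
end


section
variable {k l : ℤ} {ξs ξi m : ℝ} {ψ : ℝ → ℝ}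

lemma psi_half (hsm : ContDiffOn ℝ (⊤ : ℕ∞) ψ (Set.Ici 1))
    (hq : (k:ℝ) - (l:ℝ) = m * (ξs - ξi)) (hq1 : 1 ≤ (k:ℝ) - (l:ℝ))
    (hc'0 : 0 ≤ m*ξs - ((k:ℝ)-(l:ℝ)))
    (hβ : 1 ≤ ψ 1)
    (hode : ∀ r : ℝ, 1 < r → ψ r ^ k + ξs * r * ψ r ^ (k-1) * deriv ψ r
      - ψ r ^ l - ξi * r * ψ r ^ (l-1) * deriv ψ r = 0) :
    ∀ s : ℝ, 1 ≤ s → 1/2 < ψ s := by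
  by_contra hcon
  push_neg at hcon
  obtain ⟨s₀', hs₀'1, hs₀'⟩ := hcon
  have hq0 : (0:ℝ) < (k:ℝ) - (l:ℝ) := by linarith
  set S : Set ℝ := Set.Ici 1 ∩ ψ ⁻¹' (Set.Iic (1/2)) with hSdef
  have hSne : S.Nonempty := ⟨s₀', hs₀'1, hs₀'⟩
  have hSbdd : BddBelow S := ⟨1, fun t ht => ht.1⟩
  have hSclosed : IsClosed S :=
    hsm.continuousOn.preimage_isClosed_of_isClosed isClosed_Ici isClosed_Iic
  set s₀ : ℝ := sInf S with hs₀def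
  have hs₀S : s₀ ∈ S := hSclosed.csInf_mem hSne hSbdd
  have hs₀1 : 1 ≤ s₀ := hs₀S.1
  have hψs₀ : ψ s₀ ≤ 1/2 := hs₀S.2
  have hs₀gt : 1 < s₀ := by
    rcases lt_or_eq_of_le hs₀1 with h | h
    · exact h
    · exfalso; rw [← h] at hψs₀; linarith
  have hlower : ∀ t : ℝ, 1 ≤ t → t < s₀ → 1/2 < ψ t := by
    intro t ht1 hts
    by_contra h
    push_neg at h
    exact absurd (csInf_le hSbdd (⟨ht1, h⟩ : t ∈ S)) (not_le.2 hts)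
  -- continuity at s₀ gives a point t₁ ∈ (1, s₀) with ψ t₁ < 1
  have hca : ContinuousAt ψ s₀ := by
    apply hsm.continuousOn.continuousAt
    exact Filter.mem_of_superset (isOpen_Ioi.mem_nhds hs₀gt) Set.Ioi_subset_Ici_self
  have hev : {t : ℝ | ψ t < 1} ∈ nhds s₀ := hca (Iio_mem_nhds (by linarith))
  have hmem : Set.Ioo 1 s₀ ∩ {t : ℝ | ψ t < 1} ∈ nhdsWithin s₀ (Set.Iio s₀) := by
    apply Filter.inter_mem
    · rw [show Set.Ioo 1 s₀ = Set.Ioi 1 ∩ Set.Iio s₀ from rfl]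
      exact Filter.inter_mem (mem_nhdsWithin_of_mem_nhds (isOpen_Ioi.mem_nhds hs₀gt))
        self_mem_nhdsWithin
    · exact mem_nhdsWithin_of_mem_nhds hev
  obtain ⟨t₁, ⟨ht₁mem, ht₁lt⟩⟩ := Filter.nonempty_of_mem hmem
  have ht₁1 : 1 < t₁ := ht₁mem.1
  have ht₁s₀ : t₁ < s₀ := ht₁mem.2
  have hψt₁lt : ψ t₁ < 1 := ht₁lt
  have hψt₁gt : 1/2 < ψ t₁ := hlower t₁ ht₁1.le ht₁s₀
  -- G is constant on [1, t₁]
  have hpos : ∀ t ∈ Set.Icc (1:ℝ) t₁, 0 < ψ t := by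
    intro t ht
    have := hlower t ht.1 (lt_of_le_of_lt ht.2 ht₁s₀)
    linarith
  have hGc := G_const hsm hq hode ht₁1 hpos
  -- but G t₁ < 0 ≤ G 1
  have hG1 : 0 ≤ ψ 1 ^ (m*ξs - ((k:ℝ)-(l:ℝ))) * (ψ 1 ^ ((k:ℝ)-(l:ℝ)) - 1) := by
    have h1 : (1:ℝ) ≤ ψ 1 ^ ((k:ℝ)-(l:ℝ)) := Real.one_le_rpow hβ hq0.le
    have h2 : (0:ℝ) < ψ 1 ^ (m*ξs - ((k:ℝ)-(l:ℝ))) := Real.rpow_pos_of_pos (by linarith) _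
    nlinarith
  have hGt₁ : t₁ ^ m * ψ t₁ ^ (m*ξs - ((k:ℝ)-(l:ℝ))) * (ψ t₁ ^ ((k:ℝ)-(l:ℝ)) - 1) < 0 := by
    have h1 : ψ t₁ ^ ((k:ℝ)-(l:ℝ)) < 1 := Real.rpow_lt_one (by linarith) hψt₁lt hq0
    have h2 : (0:ℝ) < ψ t₁ ^ (m*ξs - ((k:ℝ)-(l:ℝ))) := Real.rpow_pos_of_pos (by linarith) _
    have h3 : (0:ℝ) < t₁ ^ m := Real.rpow_pos_of_pos (by linarith) _
    nlinarith [mul_pos h3 h2]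
  rw [hGc] at hGt₁
  linarith
end


section
variable {k l : ℤ} {ξs ξi m : ℝ} {ψ : ℝ → ℝ}

set_option maxHeartbeats 1000000 in
lemma key_ode {β : ℝ} (hl : 0 ≤ l) (hlk : l < k)
    (hξs : 0 < ξs) (hξi : 0 ≤ ξi) (hm2 : 2 < m)
    (hq : (k:ℝ) - (l:ℝ) = m * (ξs - ξi))
    (hβ : 1 ≤ β)
    (hsm : ContDiffOn ℝ (⊤ : ℕ∞) ψ (Set.Ici 1)) (hψ1 : ψ 1 = β)
    (hode : ∀ r : ℝ, 1 < r → ψ r ^ k + ξs * r * ψ r ^ (k-1) * deriv ψ r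
      - ψ r ^ l - ξi * r * ψ r ^ (l-1) * deriv ψ r = 0) :
    (∀ r : ℝ, 1 ≤ r →
      β - 1 ≤ r ^ m * (ψ r - 1) ∧
      r ^ m * (ψ r - 1) ≤
        β ^ (m * ξs - (k : ℝ) + (l : ℝ)) * (β ^ ((k : ℝ) - (l : ℝ)) - 1)
          / ((k : ℝ) - (l : ℝ))) ∧
    Filter.Tendsto (fun r : ℝ => r ^ m * (ψ r - 1)) Filter.atTop
      (nhds (β ^ (m * ξs - (k : ℝ) + (l : ℝ)) * (β ^ ((k : ℝ) - (l : ℝ)) - 1)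
        / ((k : ℝ) - (l : ℝ)))) ∧
    (∃ C R : ℝ, ∀ r : ℝ, R ≤ r → |ψ r - 1| ≤ C * r ^ (-m)) := by
  have hm0 : (0:ℝ) < m := by linarith
  have hq1 : (1:ℝ) ≤ (k:ℝ) - (l:ℝ) := by
    have : (l:ℝ) + 1 ≤ (k:ℝ) := by exact_mod_cast hlk
    linarith
  have hq0 : (0:ℝ) < (k:ℝ) - (l:ℝ) := by linarith
  have hc' : m * ξs - ((k:ℝ) - (l:ℝ)) = m * ξi := by linarith [hq]
  have hc'0 : 0 ≤ m * ξs - ((k:ℝ) - (l:ℝ)) := by rw [hc']; positivity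
  have hψ1β : 1 ≤ ψ 1 := by rw [hψ1]; exact hβ
  have hhalf := psi_half hsm hq hq1 hc'0 hψ1β hode
  have hψpos : ∀ s : ℝ, 1 ≤ s → 0 < ψ s := fun s hs => by linarith [hhalf s hs]
  -- the conserved quantity
  set E : ℝ := β ^ (m*ξs - ((k:ℝ)-(l:ℝ))) * (β ^ ((k:ℝ)-(l:ℝ)) - 1) with hEdef
  have hGE : ∀ s : ℝ, 1 ≤ s →
      s ^ m * ψ s ^ (m*ξs - ((k:ℝ)-(l:ℝ))) * (ψ s ^ ((k:ℝ)-(l:ℝ)) - 1) = E := by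
    intro s hs
    rcases eq_or_lt_of_le hs with h | h
    · rw [← h, Real.one_rpow, hψ1, one_mul]
    · rw [G_const hsm hq hode h (fun t ht => hψpos t ht.1), hψ1]
  have hβq1 : (1:ℝ) ≤ β ^ ((k:ℝ)-(l:ℝ)) := Real.one_le_rpow hβ hq0.le
  have hβc : (0:ℝ) < β ^ (m*ξs - ((k:ℝ)-(l:ℝ))) := Real.rpow_pos_of_pos (by linarith) _
  have hβc1 : (1:ℝ) ≤ β ^ (m*ξs - ((k:ℝ)-(l:ℝ))) := Real.one_le_rpow hβ hc'0
  have hE0 : 0 ≤ E := by nlinarith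
  -- ψ ≥ 1
  have hψge1 : ∀ s : ℝ, 1 ≤ s → 1 ≤ ψ s := by
    intro s hs
    by_contra h
    push_neg at h
    have h1 : ψ s ^ ((k:ℝ)-(l:ℝ)) < 1 := Real.rpow_lt_one (hψpos s hs).le h hq0
    have h2 : (0:ℝ) < ψ s ^ (m*ξs - ((k:ℝ)-(l:ℝ))) := Real.rpow_pos_of_pos (hψpos s hs) _
    have h3 : (0:ℝ) < s ^ m := Real.rpow_pos_of_pos (by linarith) _
    have := hGE s hs
    nlinarith [mul_pos h3 h2]
  -- geometric sum
  set Q : ℕ := (k - l).toNat with hQdef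
  have hQq : ((Q:ℕ):ℝ) = (k:ℝ) - (l:ℝ) := by
    have h' : ((k - l).toNat : ℤ) = k - l := Int.toNat_of_nonneg (by omega)
    have h'' := congrArg (fun z : ℤ => (z : ℝ)) h'
    push_cast at h''
    rw [hQdef]
    exact_mod_cast h''
  have hQ1 : 1 ≤ Q := by omega
  have hgeom : ∀ P : ℝ, 0 < P →
      P ^ ((k:ℝ)-(l:ℝ)) - 1 = (P - 1) * ∑ j ∈ Finset.range Q, P ^ j := by
    intro P hP
    rw [← hQq, Real.rpow_natCast, ← geom_sum_mul]
    ring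
  have hsumpos : ∀ P : ℝ, 1 ≤ P → (1:ℝ) ≤ ∑ j ∈ Finset.range Q, P ^ j := by
    intro P hP
    calc (1:ℝ) = P ^ 0 := by norm_num
      _ ≤ ∑ j ∈ Finset.range Q, P ^ j :=
        Finset.single_le_sum (f := fun j => P ^ j)
          (fun j _ => by positivity) (Finset.mem_range.2 (by omega))
  -- upper bound
  have hub : ∀ r : ℝ, 1 ≤ r → ((k:ℝ)-(l:ℝ)) * (r ^ m * (ψ r - 1)) ≤ E := by
    intro r hr
    have hP1 : 1 ≤ ψ r := hψge1 r hr
    have hrm1 : (1:ℝ) ≤ r ^ m := Real.one_le_rpow hr hm0.le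
    have hPc1 : (1:ℝ) ≤ ψ r ^ (m*ξs - ((k:ℝ)-(l:ℝ))) := Real.one_le_rpow hP1 hc'0
    have hbern : 1 + ((k:ℝ)-(l:ℝ)) * (ψ r - 1) ≤ ψ r ^ ((k:ℝ)-(l:ℝ)) := by
      have := one_add_mul_self_le_rpow_one_add
        (s := ψ r - 1) (by linarith) (p := (k:ℝ)-(l:ℝ)) hq1
      rwa [show 1 + (ψ r - 1) = ψ r by ring] at this
    have hGEr := hGE r hr
    have hA1 : ((k:ℝ)-(l:ℝ)) * (ψ r - 1) ≤ ψ r ^ ((k:ℝ)-(l:ℝ)) - 1 := by linarith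
    have hA0 : (0:ℝ) ≤ ((k:ℝ)-(l:ℝ)) * (ψ r - 1) :=
      mul_nonneg hq0.le (by linarith)
    have hA2 : r ^ m * (((k:ℝ)-(l:ℝ)) * (ψ r - 1)) ≤ r ^ m * (ψ r ^ ((k:ℝ)-(l:ℝ)) - 1) :=
      mul_le_mul_of_nonneg_left hA1 (by linarith)
    have hA3 : r ^ m * (ψ r ^ ((k:ℝ)-(l:ℝ)) - 1)
        ≤ (r ^ m * (ψ r ^ ((k:ℝ)-(l:ℝ)) - 1)) * ψ r ^ (m*ξs - ((k:ℝ)-(l:ℝ))) :=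
      le_mul_of_one_le_right (mul_nonneg (by linarith) (by linarith)) hPc1
    calc ((k:ℝ)-(l:ℝ)) * (r ^ m * (ψ r - 1)) = r ^ m * (((k:ℝ)-(l:ℝ)) * (ψ r - 1)) := by ring
      _ ≤ r ^ m * (ψ r ^ ((k:ℝ)-(l:ℝ)) - 1) := hA2
      _ ≤ (r ^ m * (ψ r ^ ((k:ℝ)-(l:ℝ)) - 1)) * ψ r ^ (m*ξs - ((k:ℝ)-(l:ℝ))) := hA3
      _ = r ^ m * ψ r ^ (m*ξs - ((k:ℝ)-(l:ℝ))) * (ψ r ^ ((k:ℝ)-(l:ℝ)) - 1) := by ring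
      _ = E := hGEr
  -- ψ ≤ β
  have hψleβ : ∀ r : ℝ, 1 ≤ r → ψ r ≤ β := by
    intro r hr
    by_contra h
    push_neg at h
    have hP1 : 1 ≤ ψ r := hψge1 r hr
    have h1 : β ^ (m*ξs - ((k:ℝ)-(l:ℝ))) ≤ ψ r ^ (m*ξs - ((k:ℝ)-(l:ℝ))) :=
      Real.rpow_le_rpow (by linarith) h.le hc'0
    have h2 : β ^ ((k:ℝ)-(l:ℝ)) < ψ r ^ ((k:ℝ)-(l:ℝ)) :=
      Real.rpow_lt_rpow (by linarith) h hq0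
    have hrm1 : (1:ℝ) ≤ r ^ m := Real.one_le_rpow hr hm0.le
    have hPc : (0:ℝ) < ψ r ^ (m*ξs - ((k:ℝ)-(l:ℝ))) := Real.rpow_pos_of_pos (by linarith) _
    have hGEr := hGE r hr
    have hB1 : E ≤ ψ r ^ (m*ξs - ((k:ℝ)-(l:ℝ))) * (β ^ ((k:ℝ)-(l:ℝ)) - 1) := by
      rw [hEdef]
      exact mul_le_mul_of_nonneg_right h1 (by linarith)
    have hB2 : ψ r ^ (m*ξs - ((k:ℝ)-(l:ℝ))) * (β ^ ((k:ℝ)-(l:ℝ)) - 1)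
        < ψ r ^ (m*ξs - ((k:ℝ)-(l:ℝ))) * (ψ r ^ ((k:ℝ)-(l:ℝ)) - 1) := by
      apply mul_lt_mul_of_pos_left (by linarith) hPc
    have hB3 : ψ r ^ (m*ξs - ((k:ℝ)-(l:ℝ))) * (ψ r ^ ((k:ℝ)-(l:ℝ)) - 1)
        ≤ r ^ m * (ψ r ^ (m*ξs - ((k:ℝ)-(l:ℝ))) * (ψ r ^ ((k:ℝ)-(l:ℝ)) - 1)) := by
      apply le_mul_of_one_le_left _ hrm1
      have : (1:ℝ) ≤ ψ r ^ ((k:ℝ)-(l:ℝ)) := Real.one_le_rpow hP1 hq0.le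
      exact mul_nonneg hPc.le (by linarith)
    have : E < E := by
      calc E ≤ _ := hB1
        _ < _ := hB2
        _ ≤ r ^ m * (ψ r ^ (m*ξs - ((k:ℝ)-(l:ℝ))) * (ψ r ^ ((k:ℝ)-(l:ℝ)) - 1)) := hB3
        _ = r ^ m * ψ r ^ (m*ξs - ((k:ℝ)-(l:ℝ))) * (ψ r ^ ((k:ℝ)-(l:ℝ)) - 1) := by ring
        _ = E := hGEr
    exact absurd this (lt_irrefl E)
  -- lower bound
  have hlb : ∀ r : ℝ, 1 ≤ r → β - 1 ≤ r ^ m * (ψ r - 1) := by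
    intro r hr
    have hP1 : 1 ≤ ψ r := hψge1 r hr
    have hPβ : ψ r ≤ β := hψleβ r hr
    have hPc : (0:ℝ) < ψ r ^ (m*ξs - ((k:ℝ)-(l:ℝ))) := Real.rpow_pos_of_pos (by linarith) _
    have hsumP : (1:ℝ) ≤ ∑ j ∈ Finset.range Q, ψ r ^ j := hsumpos _ hP1
    have hD : (0:ℝ) < ψ r ^ (m*ξs - ((k:ℝ)-(l:ℝ))) * ∑ j ∈ Finset.range Q, ψ r ^ j := by
      nlinarith
    have hE1 : E = r ^ m * (ψ r - 1) *
        (ψ r ^ (m*ξs - ((k:ℝ)-(l:ℝ))) * ∑ j ∈ Finset.range Q, ψ r ^ j) := by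
      rw [← hGE r hr, hgeom (ψ r) (by linarith)]
      ring
    have hE2 : E = β ^ (m*ξs - ((k:ℝ)-(l:ℝ))) * ((β - 1) * ∑ j ∈ Finset.range Q, β ^ j) := by
      rw [hEdef, hgeom β (by linarith)]
    have hDle : ψ r ^ (m*ξs - ((k:ℝ)-(l:ℝ))) * ∑ j ∈ Finset.range Q, ψ r ^ j
        ≤ β ^ (m*ξs - ((k:ℝ)-(l:ℝ))) * ∑ j ∈ Finset.range Q, β ^ j := by
      apply mul_le_mul (Real.rpow_le_rpow (by linarith) hPβ hc'0)
        (Finset.sum_le_sum fun j _ => pow_le_pow_left₀ (by linarith) hPβ j)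
        (by linarith) hβc.le
    have hstep : (β - 1) * (ψ r ^ (m*ξs - ((k:ℝ)-(l:ℝ))) * ∑ j ∈ Finset.range Q, ψ r ^ j)
        ≤ r ^ m * (ψ r - 1) * (ψ r ^ (m*ξs - ((k:ℝ)-(l:ℝ))) * ∑ j ∈ Finset.range Q, ψ r ^ j) := by
      rw [← hE1, hE2]
      have := mul_le_mul_of_nonneg_left hDle (show (0:ℝ) ≤ β - 1 by linarith)
      nlinarith [this]
    exact le_of_mul_le_mul_right hstep hD
  refine ⟨fun r hr => ⟨hlb r hr, ?_⟩, ?_, ?_⟩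
  · rw [show m * ξs - (k:ℝ) + (l:ℝ) = m * ξs - ((k:ℝ) - (l:ℝ)) by ring]
    rw [le_div_iff₀ hq0]
    have := hub r hr
    linarith [hub r hr]
  · -- tendsto
    rw [show m * ξs - (k:ℝ) + (l:ℝ) = m * ξs - ((k:ℝ) - (l:ℝ)) by ring]
    rcases eq_or_lt_of_le hβ with hβ1 | hβ1
    · -- β = 1 : ψ ≡ 1
      have hE00 : E = 0 := by rw [hEdef, ← hβ1]; simp [Real.one_rpow]
      have hψeq : ∀ r : ℝ, 1 ≤ r → ψ r = 1 := by
        intro r hr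
        have h1 := hub r hr
        have h2 := hlb r hr
        have h3 : (0:ℝ) < r ^ m := Real.rpow_pos_of_pos (by linarith) _
        have hP1 : 1 ≤ ψ r := hψge1 r hr
        rw [hE00] at h1
        have hqr : 0 < ((k:ℝ)-(l:ℝ)) * r ^ m := mul_pos hq0 h3
        have hle : ψ r ≤ 1 := by nlinarith
        exact le_antisymm hle hP1
      have : (fun r : ℝ => r ^ m * (ψ r - 1)) =ᶠ[Filter.atTop] (fun _ => 0) := by
        filter_upwards [Filter.eventually_ge_atTop (1:ℝ)] with r hr
        rw [hψeq r hr]; ring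
      rw [← hEdef, show E / ((k:ℝ)-(l:ℝ)) = 0 by rw [hE00]; ring]
      exact Filter.Tendsto.congr' this.symm tendsto_const_nhds
    · -- β > 1
      have hE' : 0 < E := by
        have : (1:ℝ) < β ^ ((k:ℝ)-(l:ℝ)) := by
          calc (1:ℝ) = 1 ^ ((k:ℝ)-(l:ℝ)) := (Real.one_rpow _).symm
            _ < β ^ ((k:ℝ)-(l:ℝ)) := Real.rpow_lt_rpow (by norm_num) hβ1 hq0
        nlinarith
      -- ψ → 1
      have hupper : ∀ r : ℝ, 1 ≤ r → ψ r ≤ 1 + (E / ((k:ℝ)-(l:ℝ))) * r ^ (-m) := by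
        intro r hr
        have h1 := hub r hr
        have h3 : (0:ℝ) < r ^ m := Real.rpow_pos_of_pos (by linarith) _
        have hrn : r ^ (-m) = (r ^ m)⁻¹ := by
          rw [Real.rpow_neg (by linarith : (0:ℝ) ≤ r)]
        rw [hrn, ← div_eq_mul_inv]
        have key : ψ r - 1 ≤ (E / ((k:ℝ)-(l:ℝ))) / r ^ m := by
          rw [le_div_iff₀ h3, le_div_iff₀ hq0]
          nlinarith [hub r hr]
        linarith
      have hψto1 : Filter.Tendsto ψ Filter.atTop (nhds 1) := by
        have htu : Filter.Tendsto (fun r : ℝ => 1 + (E / ((k:ℝ)-(l:ℝ))) * r ^ (-m))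
            Filter.atTop (nhds (1 + (E / ((k:ℝ)-(l:ℝ))) * 0)) :=
          (tendsto_const_nhds.add (tendsto_const_nhds.mul (tendsto_rpow_neg_atTop hm0)))
        rw [show (1:ℝ) + (E / ((k:ℝ)-(l:ℝ))) * 0 = 1 by ring] at htu
        apply tendsto_of_tendsto_of_tendsto_of_le_of_le' tendsto_const_nhds htu
        · filter_upwards [Filter.eventually_ge_atTop (1:ℝ)] with r hr
          exact hψge1 r hr
        · filter_upwards [Filter.eventually_ge_atTop (1:ℝ)] with r hr
          exact hupper r hr
      have hdtend : Filter.Tendsto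
          (fun r => ψ r ^ (m*ξs - ((k:ℝ)-(l:ℝ))) * ∑ j ∈ Finset.range Q, ψ r ^ j)
          Filter.atTop (nhds ((Q:ℝ))) := by
        have h1 : Filter.Tendsto (fun r => ψ r ^ (m*ξs - ((k:ℝ)-(l:ℝ)))) Filter.atTop
            (nhds 1) := by
          have hc : ContinuousAt (fun x : ℝ => x ^ (m*ξs - ((k:ℝ)-(l:ℝ)))) 1 :=
            Real.continuousAt_rpow_const 1 _ (Or.inl one_ne_zero)
          have := hc.tendsto.comp hψto1
          rwa [Real.one_rpow] at this
        have h2 : Filter.Tendsto (fun r => ∑ j ∈ Finset.range Q, ψ r ^ j) Filter.atTop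
            (nhds ((Q:ℝ))) := by
          have := tendsto_finset_sum (Finset.range Q)
            (fun j _ => (hψto1.pow j : Filter.Tendsto (fun r => ψ r ^ j) Filter.atTop (nhds (1 ^ j))))
          simpa using this
        have := h1.mul h2
        rwa [one_mul] at this
      have heq : ∀ᶠ r in Filter.atTop, r ^ m * (ψ r - 1)
          = E / (ψ r ^ (m*ξs - ((k:ℝ)-(l:ℝ))) * ∑ j ∈ Finset.range Q, ψ r ^ j) := by
        filter_upwards [Filter.eventually_ge_atTop (1:ℝ)] with r hr
        have hP1 : 1 ≤ ψ r := hψge1 r hr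
        have hPc : (0:ℝ) < ψ r ^ (m*ξs - ((k:ℝ)-(l:ℝ))) := Real.rpow_pos_of_pos (by linarith) _
        have hsumP : (1:ℝ) ≤ ∑ j ∈ Finset.range Q, ψ r ^ j := hsumpos _ hP1
        have hD : (0:ℝ) < ψ r ^ (m*ξs - ((k:ℝ)-(l:ℝ))) * ∑ j ∈ Finset.range Q, ψ r ^ j := by
          nlinarith
        rw [eq_div_iff hD.ne']
        rw [← hGE r hr, hgeom (ψ r) (by linarith)]
        ring
      have hfin : Filter.Tendsto
          (fun r => E / (ψ r ^ (m*ξs - ((k:ℝ)-(l:ℝ))) * ∑ j ∈ Finset.range Q, ψ r ^ j))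
          Filter.atTop (nhds (E / (Q:ℝ))) :=
        tendsto_const_nhds.div hdtend (by positivity)
      rw [← hEdef, show E / ((k:ℝ)-(l:ℝ)) = E / (Q:ℝ) by rw [hQq]]
      exact Filter.Tendsto.congr' (heq.mono fun r h => h.symm) hfin
  · -- big-O
    refine ⟨E / ((k:ℝ)-(l:ℝ)), 1, fun r hr => ?_⟩
    have hP1 : 1 ≤ ψ r := hψge1 r hr
    have h1 := hub r hr
    have h3 : (0:ℝ) < r ^ m := Real.rpow_pos_of_pos (by linarith) _
    have hrn : r ^ (-m) = (r ^ m)⁻¹ := Real.rpow_neg (by linarith : (0:ℝ) ≤ r) m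
    rw [abs_of_nonneg (by linarith : (0:ℝ) ≤ ψ r - 1), hrn, ← div_eq_mul_inv]
    rw [le_div_iff₀ h3, le_div_iff₀ hq0]
    nlinarith [hub r hr]
end


/-- **Lemma 3.1, part (iii)** (with the sharp constants (3.8)–(3.9)): setting
`m := m_{k,l}(a)` and `B(β) := β^{mξ̄_k - k + l}(β^{k-l} - 1)`, one has
`β - 1 ≤ r^m (ψ(r,β) - 1) ≤ B(β)/(k-l)` for all `r ≥ 1`,
`r^m (ψ(r,β) - 1) → B(β)/(k-l)` as `r → +∞`, and in particular
`ψ(r,β) = 1 + O(r^{-m})`. -/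
theorem ode_solution_decay
    (n : ℕ) (hn : 3 ≤ n) (k l : ℤ) (hl : 0 ≤ l) (hlk : l < k) (hkn : k ≤ (n : ℤ))
    (a : Fin n → ℝ) (ha : ∀ i, 0 < a i)
    (hσ : esymm n k a = esymm n l a)
    (hm : 2 < mkl n k l a) (hmn : mkl n k l a ≤ (n : ℝ))
    (β : ℝ) (hβ : 1 ≤ β) (ψ : ℝ → ℝ) (hψ : SolvesODE n k l a β ψ) :
    (∀ r : ℝ, 1 ≤ r →
      β - 1 ≤ r ^ mkl n k l a * (ψ r - 1) ∧
      r ^ mkl n k l a * (ψ r - 1) ≤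
        β ^ (mkl n k l a * xiSup n k a - (k : ℝ) + (l : ℝ)) * (β ^ ((k : ℝ) - (l : ℝ)) - 1)
          / ((k : ℝ) - (l : ℝ))) ∧
    Filter.Tendsto (fun r : ℝ => r ^ mkl n k l a * (ψ r - 1)) Filter.atTop
      (nhds (β ^ (mkl n k l a * xiSup n k a - (k : ℝ) + (l : ℝ)) * (β ^ ((k : ℝ) - (l : ℝ)) - 1)
        / ((k : ℝ) - (l : ℝ)))) ∧
    (∃ C R : ℝ, ∀ r : ℝ, R ≤ r → |ψ r - 1| ≤ C * r ^ (-(mkl n k l a)))  := by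
  obtain ⟨hsm, hψ1, hode⟩ := hψ
  have hn0 : 0 < n := by omega
  have hξs : 0 < xiSup n k a := xiSup_pos ha (by omega) hkn
  have hξi : 0 ≤ xiInf n l a :=
    xiInf_nonneg hn0 l ha (esymm_pos n l a ha hl (by omega))
  have hq0 : (0:ℝ) < (k:ℝ) - (l:ℝ) := by
    have : (l:ℝ) < (k:ℝ) := by exact_mod_cast hlk
    linarith
  have hD : 0 < xiSup n k a - xiInf n l a := by
    by_contra h
    push_neg at h
    have h2 : mkl n k l a ≤ 0 := by
      show ((k:ℝ)-(l:ℝ))/(xiSup n k a - xiInf n l a) ≤ 0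
      exact div_nonpos_of_nonneg_of_nonpos hq0.le h
    linarith [hm]
  have hq : (k:ℝ) - (l:ℝ) = mkl n k l a * (xiSup n k a - xiInf n l a) := by
    rw [show mkl n k l a = ((k:ℝ)-(l:ℝ))/(xiSup n k a - xiInf n l a) from rfl]
    field_simp
  exact key_ode hl hlk hξs hξi hm hq hβ hsm hψ1 hode
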